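/- Let L, λ̃ > 0, let p : ℝ² → ℝ be a C^∞ function solving the observer kernel model (p-model) with parameter λ̃, and assume β := λ̃ - (1/2) ∫_0^L (∂_x p)(L,y)² dy - (1/2) ∫_0^L (∂_y p)(x,0)² dx > 0. Let w : ℝ² → ℝ be a C^∞ smooth solution of the single-measurement target error system. Then for all t ≥ 0: ( ∫_0^L w(x,t)² dx )^{1/2} ≤ ( ∫_0^L w(x,0)² dx )^{1/2} · e^{-β t}. -/

import Mathlib

open MeasureTheory Real

/-- Partial derivative in the first variable. -/
noncomputable def pd1 (f : ℝ × ℝ → ℝ) : ℝ × ℝ → ℝ := fun q => deriv (fun s => f (s, q.2)) q.1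

/-- Partial derivative in the second variable. -/
noncomputable def pd2 (f : ℝ × ℝ → ℝ) : ℝ × ℝ → ℝ := fun q => deriv (fun s => f (q.1, s)) q.2

lemma hasDerivAt_pd1 {f : ℝ × ℝ → ℝ} (hf : ContDiff ℝ (⊤ : ℕ∞) f) (x y : ℝ) :
    HasDerivAt (fun s => f (s, y)) (pd1 f (x, y)) x := by
  have h : HasDerivAt (fun s => f (s, y)) (fderiv ℝ f (x, y) (1, 0)) x := by
    have hg : HasDerivAt (fun s : ℝ => (s, y)) ((1 : ℝ), (0 : ℝ)) x :=
      (hasDerivAt_id x).prodMk (hasDerivAt_const x y)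
    exact ((hf.differentiable (by simp) (x, y)).hasFDerivAt.comp_hasDerivAt x hg)
  have : pd1 f (x, y) = fderiv ℝ f (x, y) (1, 0) := by
    simpa [pd1] using h.deriv
  rw [this]; exact h

lemma hasDerivAt_pd2 {f : ℝ × ℝ → ℝ} (hf : ContDiff ℝ (⊤ : ℕ∞) f) (x y : ℝ) :
    HasDerivAt (fun s => f (x, s)) (pd2 f (x, y)) y := by
  have h : HasDerivAt (fun s => f (x, s)) (fderiv ℝ f (x, y) (0, 1)) y := by
    have hg : HasDerivAt (fun s : ℝ => (x, s)) ((0 : ℝ), (1 : ℝ)) y :=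
      (hasDerivAt_const y x).prodMk (hasDerivAt_id y)
    exact ((hf.differentiable (by simp) (x, y)).hasFDerivAt.comp_hasDerivAt y hg)
  have : pd2 f (x, y) = fderiv ℝ f (x, y) (0, 1) := by
    simpa [pd2] using h.deriv
  rw [this]; exact h

lemma contDiff_pd1 {f : ℝ × ℝ → ℝ} (hf : ContDiff ℝ (⊤ : ℕ∞) f) : ContDiff ℝ (⊤ : ℕ∞) (pd1 f) := by
  have : pd1 f = fun q : ℝ × ℝ => fderiv ℝ f q (1, 0) := by
    funext q
    show deriv (fun s => f (s, q.2)) q.1 = fderiv ℝ f q (1, 0)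
    have hg : HasDerivAt (fun s : ℝ => (s, q.2)) ((1 : ℝ), (0 : ℝ)) q.1 :=
      (hasDerivAt_id q.1).prodMk (hasDerivAt_const q.1 q.2)
    have h : HasDerivAt (fun s => f (s, q.2)) (fderiv ℝ f q (1, 0)) q.1 := by
      have := (hf.differentiable (by simp) q).hasFDerivAt.comp_hasDerivAt q.1 (by simpa using hg)
      exact this
    exact h.deriv
  rw [this]
  exact (hf.fderiv_right (by simp)).clm_apply contDiff_const

lemma contDiff_pd2 {f : ℝ × ℝ → ℝ} (hf : ContDiff ℝ (⊤ : ℕ∞) f) : ContDiff ℝ (⊤ : ℕ∞) (pd2 f) := by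
  have : pd2 f = fun q : ℝ × ℝ => fderiv ℝ f q (0, 1) := by
    funext q
    show deriv (fun s => f (q.1, s)) q.2 = fderiv ℝ f q (0, 1)
    have hg : HasDerivAt (fun s : ℝ => (q.1, s)) ((0 : ℝ), (1 : ℝ)) q.2 :=
      (hasDerivAt_const q.2 q.1).prodMk (hasDerivAt_id q.2)
    have h : HasDerivAt (fun s => f (q.1, s)) (fderiv ℝ f q (0, 1)) q.2 := by
      have := (hf.differentiable (by simp) q).hasFDerivAt.comp_hasDerivAt q.2 (by simpa using hg)
      exact this
    exact h.deriv
  rw [this]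
  exact (hf.fderiv_right (by simp)).clm_apply contDiff_const

lemma cs_interval {f g : ℝ → ℝ} (hf : Continuous f) (hg : Continuous g) {L : ℝ} (hL : 0 ≤ L) :
    (∫ x in (0:ℝ)..L, f x * g x) ^ 2
      ≤ (∫ x in (0:ℝ)..L, f x ^ 2) * ∫ x in (0:ℝ)..L, g x ^ 2 := by
  set I := ∫ x in (0:ℝ)..L, f x ^ 2 with hI
  set J := ∫ x in (0:ℝ)..L, g x ^ 2 with hJ
  set K := ∫ x in (0:ℝ)..L, f x * g x with hK
  have key : ∀ r : ℝ, 0 ≤ I * (r * r) + (2 * K) * r + J := by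
    intro r
    have hint1 : IntervalIntegrable (fun x => (r * r) * f x ^ 2) volume 0 L :=
      (continuous_const.mul (hf.pow 2)).intervalIntegrable 0 L
    have hint2 : IntervalIntegrable (fun x => (2 * r) * (f x * g x)) volume 0 L :=
      (continuous_const.mul (hf.mul hg)).intervalIntegrable 0 L
    have hint3 : IntervalIntegrable (fun x => g x ^ 2) volume 0 L :=
      (hg.pow 2).intervalIntegrable 0 L
    have e1 : (∫ x in (0:ℝ)..L, (r * f x + g x) ^ 2)
        = I * (r * r) + (2 * K) * r + J := by
      have e0 : (fun x => (r * f x + g x) ^ 2)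
          = fun x => (r * r) * f x ^ 2 + ((2 * r) * (f x * g x) + g x ^ 2) := by
        funext x; ring
      rw [e0, intervalIntegral.integral_add hint1 (hint2.add hint3),
        intervalIntegral.integral_add hint2 hint3,
        intervalIntegral.integral_const_mul, intervalIntegral.integral_const_mul, hI, hJ, hK]
      ring
    rw [← e1]
    exact intervalIntegral.integral_nonneg hL fun x _ => sq_nonneg _
  have hd := discrim_le_zero key
  rw [discrim] at hd
  nlinarith [hd]

lemma hasDerivAt_Efun {w : ℝ × ℝ → ℝ} (hw : ContDiff ℝ (⊤ : ℕ∞) w) (L t₀ : ℝ) :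
    HasDerivAt (fun t => ∫ x in (0:ℝ)..L, w (x, t) ^ 2)
      (∫ x in (0:ℝ)..L, 2 * w (x, t₀) * pd2 w (x, t₀)) t₀ := by
  have hwc : Continuous w := hw.continuous
  have h2c : Continuous (pd2 w) := (contDiff_pd2 hw).continuous
  have hφ : Continuous fun q : ℝ × ℝ => 2 * w q * pd2 w q :=
    (continuous_const.mul hwc).mul h2c
  obtain ⟨C, hC⟩ := (isCompact_uIcc.prod isCompact_Icc :
      IsCompact ((Set.uIcc (0:ℝ) L) ×ˢ (Set.Icc (t₀ - 1) (t₀ + 1)))).exists_bound_of_continuousOn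
    hφ.continuousOn
  have hmain := intervalIntegral.hasDerivAt_integral_of_dominated_loc_of_deriv_le
    (F := fun t x => w (x, t) ^ 2) (F' := fun t x => 2 * w (x, t) * pd2 w (x, t))
    (x₀ := t₀) (s := Metric.ball t₀ 1) (bound := fun _ => C) (a := 0) (b := L) (μ := volume)
    (Metric.ball_mem_nhds t₀ one_pos)
    (Filter.Eventually.of_forall fun t =>
      ((hwc.comp (Continuous.prodMk_left t)).pow 2).aestronglyMeasurable)
    (((hwc.comp (Continuous.prodMk_left t₀)).pow 2).intervalIntegrable 0 L)
    ((hφ.comp (Continuous.prodMk_left t₀)).aestronglyMeasurable)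
    (Filter.Eventually.of_forall fun x hx => fun t ht => by
      have hmem : (x, t) ∈ (Set.uIcc (0:ℝ) L) ×ˢ (Set.Icc (t₀ - 1) (t₀ + 1)) := by
        constructor
        · exact Set.uIoc_subset_uIcc hx
        · have := Metric.mem_ball.mp ht
          rw [Real.dist_eq] at this
          constructor <;> [linarith [abs_lt.mp this |>.1]; linarith [abs_lt.mp this |>.2]]
      exact hC (x, t) hmem)
    (intervalIntegrable_const)
    (Filter.Eventually.of_forall fun x hx => fun t ht => by
      have h := (hasDerivAt_pd2 hw x t).fun_pow 2
      simpa using h)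
  exact hmain.2


/-- `p` solves the observer kernel model (p-model) with parameter `lt` on the triangle `Δ_L`. -/
def SolvesPEq (L lt : ℝ) (p : ℝ × ℝ → ℝ) : Prop :=
  (∀ x y : ℝ, 0 ≤ y → y ≤ x → x ≤ L →
      pd1 (pd1 (pd1 p)) (x, y) + pd2 (pd2 (pd2 p)) (x, y) + pd1 p (x, y) + pd2 p (x, y)
        = lt * p (x, y)) ∧
  (∀ y : ℝ, 0 ≤ y → y ≤ L → p (L, y) = 0) ∧
  (∀ x : ℝ, 0 ≤ x → x ≤ L → p (x, x) = 0) ∧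
  (∀ x : ℝ, 0 ≤ x → x ≤ L → pd1 p (x, x) = -(lt * (x - L)) / 3)

/-- `w` (arguments `(x,t)`) is a smooth solution of the single-measurement target error
system. -/
def SingleTargetErr (L lt : ℝ) (p w : ℝ × ℝ → ℝ) : Prop :=
  (∀ x t : ℝ, 0 ≤ x → x ≤ L → 0 ≤ t →
      pd2 w (x, t) + pd1 w (x, t) + pd1 (pd1 (pd1 w)) (x, t) + lt * w (x, t)
        = -(pd2 p (x, 0)) * pd1 w (0, t)) ∧
  (∀ t : ℝ, 0 ≤ t → w (0, t) = 0) ∧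
  (∀ t : ℝ, 0 ≤ t → w (L, t) = 0) ∧
  (∀ t : ℝ, 0 ≤ t → pd1 w (L, t) = ∫ y in (0:ℝ)..L, pd1 p (L, y) * w (y, t))

/-- exponential `L²` decay of smooth solutions of the single-measurement
target error system with rate `β`. -/
theorem stmt_15 (L lt : ℝ) (hL : 0 < L) (hlt : 0 < lt)
    (p : ℝ × ℝ → ℝ) (hp : ContDiff ℝ (⊤ : ℕ∞) p) (hpEq : SolvesPEq L lt p)
    (hβ : 0 < lt - (1 / 2) * (∫ y in (0:ℝ)..L, (pd1 p (L, y)) ^ 2)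
            - (1 / 2) * ∫ x in (0:ℝ)..L, (pd2 p (x, 0)) ^ 2)
    (w : ℝ × ℝ → ℝ) (hw : ContDiff ℝ (⊤ : ℕ∞) w) (hwEq : SingleTargetErr L lt p w) :
    ∀ t : ℝ, 0 ≤ t →
      Real.sqrt (∫ x in (0:ℝ)..L, w (x, t) ^ 2)
        ≤ Real.sqrt (∫ x in (0:ℝ)..L, w (x, 0) ^ 2) *
            Real.exp (-(lt - (1 / 2) * (∫ y in (0:ℝ)..L, (pd1 p (L, y)) ^ 2)
              - (1 / 2) * ∫ x in (0:ℝ)..L, (pd2 p (x, 0)) ^ 2) * t) := by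
  obtain ⟨hpde, hw0, hwL, hwXL⟩ := hwEq
  set A := ∫ y in (0:ℝ)..L, (pd1 p (L, y)) ^ 2 with hA
  set B := ∫ x in (0:ℝ)..L, (pd2 p (x, 0)) ^ 2 with hB
  set E : ℝ → ℝ := fun t => ∫ x in (0:ℝ)..L, w (x, t) ^ 2 with hE
  set E' : ℝ → ℝ := fun t => ∫ x in (0:ℝ)..L, 2 * w (x, t) * pd2 w (x, t) with hE'
  have hEd : ∀ t, HasDerivAt E (E' t) t := fun t => hasDerivAt_Efun hw L t
  have hwc : Continuous w := hw.continuous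
  have hw1 : Continuous (pd1 w) := (contDiff_pd1 hw).continuous
  have hw111 : Continuous (pd1 (pd1 (pd1 w))) :=
    (contDiff_pd1 (contDiff_pd1 (contDiff_pd1 hw))).continuous
  have hp1 : Continuous (pd1 p) := (contDiff_pd1 hp).continuous
  have hp2 : Continuous (pd2 p) := (contDiff_pd2 hp).continuous
  have hEnn : ∀ t, 0 ≤ E t := fun t =>
    intervalIntegral.integral_nonneg hL.le fun x _ => sq_nonneg _
  set β := lt - 1 / 2 * A - 1 / 2 * B with hβdef
  have key : ∀ t, 0 ≤ t → E' t ≤ -(2 * β) * E t := by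
    intro t ht
    set c := pd1 w (0, t) with hc
    have hxt : Continuous fun x : ℝ => (x, t) := Continuous.prodMk_left t
    have hx0 : Continuous fun x : ℝ => (x, (0 : ℝ)) := Continuous.prodMk_left 0
    have hicc : Set.uIcc (0 : ℝ) L = Set.Icc 0 L := Set.uIcc_of_le hL.le
    have hI1 : (∫ x in (0:ℝ)..L, 2 * w (x, t) * pd1 w (x, t))
        = w (L, t) ^ 2 - w (0, t) ^ 2 := by
      apply intervalIntegral.integral_eq_sub_of_hasDerivAt
      · intro x hx
        simpa using (hasDerivAt_pd1 hw x t).fun_pow 2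
      · exact ((continuous_const.mul (hwc.comp hxt)).mul (hw1.comp hxt)).intervalIntegrable 0 L
    have hG : ∀ x : ℝ, HasDerivAt
        (fun x => 2 * w (x, t) * pd1 (pd1 w) (x, t) - pd1 w (x, t) ^ 2)
        (2 * w (x, t) * pd1 (pd1 (pd1 w)) (x, t)) x := by
      intro x
      have h1 := hasDerivAt_pd1 hw x t
      have h2 := hasDerivAt_pd1 (contDiff_pd1 hw) x t
      have h3 := hasDerivAt_pd1 (contDiff_pd1 (contDiff_pd1 hw)) x t
      have h4 := ((h1.const_mul 2).fun_mul h3).fun_sub (h2.fun_pow 2)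
      refine h4.congr_deriv ?_
      push_cast
      ring
    have hI2 : (∫ x in (0:ℝ)..L, 2 * w (x, t) * pd1 (pd1 (pd1 w)) (x, t))
        = (2 * w (L, t) * pd1 (pd1 w) (L, t) - pd1 w (L, t) ^ 2)
          - (2 * w (0, t) * pd1 (pd1 w) (0, t) - pd1 w (0, t) ^ 2) := by
      apply intervalIntegral.integral_eq_sub_of_hasDerivAt fun x _ => hG x
      exact ((continuous_const.mul (hwc.comp hxt)).mul (hw111.comp hxt)).intervalIntegrable 0 L
    set Kk := ∫ x in (0:ℝ)..L, pd2 p (x, 0) * w (x, t) with hKk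
    have hint1 : IntervalIntegrable (fun x => -(2 * c) * (pd2 p (x, 0) * w (x, t))) volume 0 L :=
      (continuous_const.mul ((hp2.comp hx0).mul (hwc.comp hxt))).intervalIntegrable 0 L
    have hint2 : IntervalIntegrable
        (fun x => (-1 : ℝ) * (2 * w (x, t) * pd1 w (x, t))) volume 0 L :=
      (continuous_const.mul ((continuous_const.mul (hwc.comp hxt)).mul
        (hw1.comp hxt))).intervalIntegrable 0 L
    have hint3 : IntervalIntegrable
        (fun x => (-1 : ℝ) * (2 * w (x, t) * pd1 (pd1 (pd1 w)) (x, t))) volume 0 L :=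
      (continuous_const.mul ((continuous_const.mul (hwc.comp hxt)).mul
        (hw111.comp hxt))).intervalIntegrable 0 L
    have hint4 : IntervalIntegrable (fun x => -(2 * lt) * w (x, t) ^ 2) volume 0 L :=
      (continuous_const.mul ((hwc.comp hxt).pow 2)).intervalIntegrable 0 L
    have hsplit : E' t = -(2 * c) * Kk
        + ((-1) * (∫ x in (0:ℝ)..L, 2 * w (x, t) * pd1 w (x, t))
        + ((-1) * (∫ x in (0:ℝ)..L, 2 * w (x, t) * pd1 (pd1 (pd1 w)) (x, t))
        + -(2 * lt) * E t)) := by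
      have e0 : E' t = ∫ x in (0:ℝ)..L, (-(2 * c) * (pd2 p (x, 0) * w (x, t))
          + ((-1 : ℝ) * (2 * w (x, t) * pd1 w (x, t))
          + ((-1 : ℝ) * (2 * w (x, t) * pd1 (pd1 (pd1 w)) (x, t))
          + -(2 * lt) * w (x, t) ^ 2))) := by
        apply intervalIntegral.integral_congr
        intro x hx
        rw [hicc] at hx
        have hpd := hpde x t hx.1 hx.2 ht
        dsimp only
        linear_combination (2 * w (x, t)) * hpd
      rw [e0, intervalIntegral.integral_add hint1 (hint2.add (hint3.add hint4)),
        intervalIntegral.integral_add hint2 (hint3.add hint4),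
        intervalIntegral.integral_add hint3 hint4,
        intervalIntegral.integral_const_mul, intervalIntegral.integral_const_mul,
        intervalIntegral.integral_const_mul, intervalIntegral.integral_const_mul]
    have hw0t : w (0, t) = 0 := hw0 t ht
    have hwLt : w (L, t) = 0 := hwL t ht
    have hCS1 : pd1 w (L, t) ^ 2 ≤ A * E t := by
      have hrep : pd1 w (L, t) = ∫ y in (0:ℝ)..L, pd1 p (L, y) * w (y, t) := hwXL t ht
      have hcs := cs_interval (f := fun y => pd1 p (L, y)) (g := fun y => w (y, t))
        (hp1.comp (Continuous.prodMk_right L)) (hwc.comp hxt) hL.le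
      rw [hrep]
      exact hcs
    have hCS2 : Kk ^ 2 ≤ B * E t :=
      cs_interval (hp2.comp hx0) (hwc.comp hxt) hL.le
    rw [hsplit, hI1, hI2, hw0t, hwLt, hβdef]
    nlinarith [hCS1, hCS2, sq_nonneg (c + Kk), hEnn t]
  have hg : ∀ t : ℝ, HasDerivAt (fun t => E t * Real.exp (2 * β * t))
      (E' t * Real.exp (2 * β * t) + E t * (Real.exp (2 * β * t) * (2 * β))) t := by
    intro t
    have hlin : HasDerivAt (fun t : ℝ => 2 * β * t) (2 * β) t := by
      simpa using (hasDerivAt_id t).const_mul (2 * β)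
    exact (hEd t).mul hlin.exp
  have hanti : AntitoneOn (fun t => E t * Real.exp (2 * β * t)) (Set.Ici 0) := by
    apply antitoneOn_of_deriv_nonpos (convex_Ici 0)
    · exact fun t _ => (hg t).differentiableAt.continuousAt.continuousWithinAt
    · intro x _
      exact (hg x).differentiableAt.differentiableWithinAt
    · intro x hx
      rw [interior_Ici] at hx
      rw [(hg x).deriv]
      have hkey := key x (le_of_lt hx)
      nlinarith [Real.exp_pos (2 * β * x), hEnn x]
  intro t ht
  have hle : E t * Real.exp (2 * β * t) ≤ E 0 * Real.exp (2 * β * 0) :=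
    hanti Set.self_mem_Ici ht ht
  have h2 : E t * Real.exp (2 * β * t) ≤ E 0 := by simpa using hle
  have h3 : E t ≤ E 0 * Real.exp (-(2 * β * t)) := by
    have h4 := mul_le_mul_of_nonneg_right h2 (Real.exp_nonneg (-(2 * β * t)))
    rwa [mul_assoc, ← Real.exp_add, add_neg_cancel, Real.exp_zero, mul_one] at h4
  calc Real.sqrt (E t) ≤ Real.sqrt (E 0 * Real.exp (-(2 * β * t))) := Real.sqrt_le_sqrt h3
    _ = Real.sqrt (E 0) * Real.exp (-β * t) := by
        rw [show -(2 * β * t) = -β * t + -β * t by ring, Real.exp_add, ← sq,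
          Real.sqrt_mul (hEnn 0), Real.sqrt_sq (Real.exp_nonneg _)]
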